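/- In a decreasing consumption MDP, if Safe_M(s) < ∞ then there exists an action a safe in s, i.e., either s ∉ R and C(s,a) + max_{t ∈ Succ(s,a)} Safe_M(t) ≤ Safe_M(s), or s ∈ R and C(s,a) + max_{t ∈ Succ(s,a)} Safe_M(t) ≤ cap. -/

import Mathlib

open scoped Classical NNReal ENat

noncomputable section

/-- A consumption Markov decision process. -/
structure CMDP (S A : Type) [Fintype S] where
  Δ : S → A → S → NNReal
  Δ_sum : ∀ s a, (∑ t, Δ s a t) = 1
  C : S → A → ℕ
  R : Set S
  cap : ℕ

namespace CMDP

variable {S A : Type} [Fintype S]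

/-- Strategies map histories (initial state, list of action/state steps) to actions. -/
abbrev Strat (S A : Type) : Type := S × List (A × S) → A

/-- Last state of a history. -/
def lastState (s : S) : List (A × S) → S
  | [] => s
  | (_, t) :: rest => lastState t rest

/-- The `i`-th state (0-indexed) of a history. -/
def stateAt (s : S) (steps : List (A × S)) (i : ℕ) : S :=
  (s :: steps.map Prod.snd).getD i s

variable (M : CMDP S A)

def Succ (s : S) (a : A) : Set S := {t | 0 < M.Δ s a t}

/-- Total consumption along a finite path. -/
def consAux : S → List (A × S) → ℕ
  | _, [] => 0
  | s, (a, t) :: rest => M.C s a + consAux t rest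

/-- One step of the energy-level update. -/
def levelStep (s : S) (a : A) (l : ℕ) : Option ℕ :=
  if s ∈ M.R then (if M.C s a ≤ M.cap then some (M.cap - M.C s a) else none)
  else (if M.C s a ≤ l then some (l - M.C s a) else none)

def energyFrom : Option ℕ → S → List (A × S) → Option ℕ
  | none, _, _ => none
  | some l, _, [] => some l
  | some l, s, (a, t) :: rest => energyFrom (M.levelStep s a l) t rest

/-- Energy level of a history initialized by `d` (`none` = ⊥, exhaustion). -/
def energy (d : ℕ) (s : S) (steps : List (A × S)) : Option ℕ :=
  M.energyFrom (some d) s steps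

/-- Validity of a finite path. -/
def ValidPath : S → List (A × S) → Prop
  | _, [] => True
  | s, (a, t) :: rest => t ∈ M.Succ s a ∧ ValidPath t rest

/-- First state of a run. -/
def runState (ρ : ℕ → S × A) (i : ℕ) : S := (ρ i).1

/-- The finite prefix of a run with `i` steps. -/
def prefixSteps (ρ : ℕ → S × A) (i : ℕ) : List (A × S) :=
  (List.range i).map fun k => ((ρ k).2, (ρ (k + 1)).1)

def IsRun (ρ : ℕ → S × A) : Prop := ∀ i, (ρ (i + 1)).1 ∈ M.Succ (ρ i).1 (ρ i).2

/-- A run is `d`-safe if the energy level of every finite prefix is defined. -/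
def DSafe (d : ℕ) (ρ : ℕ → S × A) : Prop :=
  ∀ i, M.energy d (runState ρ 0) (prefixSteps ρ i) ≠ none

/-- A run is compatible with a strategy. -/
def Compat (σ : Strat S A) (ρ : ℕ → S × A) : Prop :=
  M.IsRun ρ ∧ ∀ i, (ρ i).2 = σ (runState ρ 0, prefixSteps ρ i)

def CompatFrom (σ : Strat S A) (s : S) (ρ : ℕ → S × A) : Prop :=
  M.Compat σ ρ ∧ runState ρ 0 = s

/-- A strategy is `d`-safe in `s` if all compatible runs from `s` are `d`-safe. -/
def SafeStrat (σ : Strat S A) (d : ℕ) (s : S) : Prop :=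
  ∀ ρ, M.CompatFrom σ s ρ → M.DSafe d ρ

/-- A finite history compatible with a strategy. -/
def CompatHist (σ : Strat S A) (s : S) (steps : List (A × S)) : Prop :=
  M.ValidPath s steps ∧
    ∀ (i : ℕ) (h : i < steps.length), (steps.get ⟨i, h⟩).1 = σ (s, steps.take i)

def Memoryless (σ : Strat S A) : Prop :=
  ∀ h₁ h₂ : S × List (A × S), lastState h₁.1 h₁.2 = lastState h₂.1 h₂.2 → σ h₁ = σ h₂

/-- Cost of a run up to the first visit of `T` (∞ if `T` is never visited). -/
def reachCost (T : Set S) (ρ : ℕ → S × A) : ℕ∞ :=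
  ⨅ i ∈ {i : ℕ | runState ρ i ∈ T}, (M.consAux (runState ρ 0) (prefixSteps ρ i) : ℕ∞)

/-- `i`-step bounded reachability cost. -/
def reachCostBdd (T : Set S) (n : ℕ) (ρ : ℕ → S × A) : ℕ∞ :=
  ⨅ i ∈ {i : ℕ | i ≤ n ∧ runState ρ i ∈ T}, (M.consAux (runState ρ 0) (prefixSteps ρ i) : ℕ∞)

/-- Reachability cost requiring at least one step. -/
def reachCostPlus (T : Set S) (ρ : ℕ → S × A) : ℕ∞ :=
  ⨅ i ∈ {i : ℕ | 1 ≤ i ∧ runState ρ i ∈ T}, (M.consAux (runState ρ 0) (prefixSteps ρ i) : ℕ∞)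

def reachCostStrat (T : Set S) (σ : Strat S A) (s : S) : ℕ∞ :=
  ⨆ ρ ∈ {ρ | M.CompatFrom σ s ρ}, M.reachCost T ρ

def minReach (T : Set S) (s : S) : ℕ∞ :=
  ⨅ σ : Strat S A, M.reachCostStrat T σ s

def minReachBdd (T : Set S) (n : ℕ) (s : S) : ℕ∞ :=
  ⨅ σ : Strat S A, ⨆ ρ ∈ {ρ | M.CompatFrom σ s ρ}, M.reachCostBdd T n ρ

def minReachPlus (T : Set S) (s : S) : ℕ∞ :=
  ⨅ σ : Strat S A, ⨆ ρ ∈ {ρ | M.CompatFrom σ s ρ}, M.reachCostPlus T ρ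

/-- The Bellman operator for minimum cost reachability of `T`. -/
def bellman (T : Set S) (v : S → ℕ∞) : S → ℕ∞ := fun s =>
  if s ∈ T then 0 else ⨅ a : A, ((M.C s a : ℕ∞) + ⨆ t ∈ M.Succ s a, v t)

/-- The initial vector: `0` on `T`, `∞` elsewhere. -/
def xTvec (T : Set S) : S → ℕ∞ := fun s => if s ∈ T then 0 else ⊤

/-- Length of the longest simple path of `M`. -/
def longestSimple : ℕ :=
  sSup {n | ∃ (s : S) (steps : List (A × S)),
    M.ValidPath s steps ∧ (s :: steps.map Prod.snd).Nodup ∧ steps.length = n}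

/-- The augmented CMDP `M̃` with a fresh non-reload copy of every state. -/
def augment : CMDP (S ⊕ S) A where
  Δ := fun x a t =>
    Sum.elim (fun u => M.Δ (Sum.elim id id x) a u) (fun _ => (0 : NNReal)) t
  Δ_sum := by
    intro x a
    rw [Fintype.sum_sum_type]
    simp [M.Δ_sum (Sum.elim id id x) a]
  C := fun x a => M.C (Sum.elim id id x) a
  R := Sum.inl '' M.R
  cap := M.cap

/-- Truncation to `0` on reload states. -/
def strunc (x : S → ℕ∞) : S → ℕ∞ := fun s => if s ∈ M.R then 0 else x s

/-- The truncated Bellman-like operator `G`. -/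
def opG (v : S → ℕ∞) : S → ℕ∞ := fun s =>
  ⨅ a : A, ((M.C s a : ℕ∞) + ⨆ t ∈ M.Succ s a, M.strunc v t)

/-- Minimal `d ≤ cap` such that some strategy is `d`-safe in `s` (∞ if none). -/
def safeVec (s : S) : ℕ∞ :=
  ⨅ d ∈ {d : ℕ | d ≤ M.cap ∧ ∃ σ : Strat S A, M.SafeStrat σ d s}, (d : ℕ∞)

/-- An action safe in a state. -/
def SafeAction (s : S) (a : A) : Prop :=
  (s ∉ M.R ∧ ((M.C s a : ℕ∞) + ⨆ t ∈ M.Succ s a, M.safeVec t) ≤ M.safeVec s) ∨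
  (s ∈ M.R ∧ ((M.C s a : ℕ∞) + ⨆ t ∈ M.Succ s a, M.safeVec t) ≤ (M.cap : ℕ∞))

/-- A CMDP is decreasing if every (valid) simple cycle has positive consumption. -/
def Decreasing : Prop :=
  ∀ (s : S) (steps : List (A × S)), M.ValidPath s steps → steps ≠ [] →
    lastState s steps = s → (s :: (steps.map Prod.snd).dropLast).Nodup →
    0 < M.consAux s steps

/-- Selection according to a selection rule: the action of the largest
element of the domain below the counter value. -/
def selectFrom (φ : ℕ → Option A) (m : ℕ) (a₀ : A) : A :=
  (((List.range (m + 1)).reverse).findSome? φ).getD a₀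

/-- The finite counter strategy `Σ^y` induced by a counter selector. -/
def counterStrategy (sel : S → ℕ → Option A) (y : S → ℕ) (a₀ : A) : Strat S A :=
  fun h =>
    match M.energy (y h.1) h.1 h.2 with
    | some m => selectFrom (sel (lastState h.1 h.2)) m a₀
    | none => a₀

/-- The `SPR` value of an action. -/
def spr (s : S) (a : A) (x : S → ℕ∞) : ℕ∞ :=
  (M.C s a : ℕ∞) +
    ⨅ t ∈ M.Succ s a, max (x t) (⨆ t' ∈ {t' ∈ M.Succ s a | t' ≠ t}, M.safeVec t')

def opA (T : Set S) (x : S → ℕ∞) : S → ℕ∞ := fun s =>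
  if s ∈ T then M.safeVec s else ⨅ a : A, M.spr s a x

/-- Two-sided truncation. -/
def trunc2 (x : S → ℕ∞) : S → ℕ∞ := fun s =>
  if (M.cap : ℕ∞) < x s then ⊤ else if s ∈ M.R then 0 else x s

def opB (T : Set S) (x : S → ℕ∞) : S → ℕ∞ := M.trunc2 (M.opA T x)

def yTvec (T : Set S) : S → ℕ∞ := fun s => if s ∈ T then M.safeVec s else ⊤

def VisitsWithin (T : Set S) (i : ℕ) (ρ : ℕ → S × A) : Prop :=
  ∃ j ≤ i, runState ρ j ∈ T

def Visits (T : Set S) (ρ : ℕ → S × A) : Prop := ∃ j, runState ρ j ∈ T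

/-- Minimal `ℓ ≤ cap` s.t. some `ℓ`-safe strategy from `s` has a run visiting `T`
within the first `i` steps. -/
def safePRBdd (T : Set S) (i : ℕ) (s : S) : ℕ∞ :=
  ⨅ ℓ ∈ {ℓ : ℕ | ℓ ≤ M.cap ∧ ∃ σ : Strat S A, M.SafeStrat σ ℓ s ∧
      ∃ ρ, M.CompatFrom σ s ρ ∧ VisitsWithin T i ρ}, (ℓ : ℕ∞)

/-- Minimal `ℓ ≤ cap` s.t. some `ℓ`-safe strategy from `s` has a run visiting `T`. -/
def safePR (T : Set S) (s : S) : ℕ∞ :=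
  ⨅ ℓ ∈ {ℓ : ℕ | ℓ ≤ M.cap ∧ ∃ σ : Strat S A, M.SafeStrat σ ℓ s ∧
      ∃ ρ, M.CompatFrom σ s ρ ∧ Visits T ρ}, (ℓ : ℕ∞)

/-- Replace the set of reload states. -/
def setReload (R' : Set S) : CMDP S A := { M with R := R' }

/-- Probability of a finite continuation of a history under a strategy. -/
def pathProbAux (σ : Strat S A) : S × List (A × S) → List (A × S) → NNReal
  | _, [] => 1
  | h, (a, t) :: rest =>
      (if σ h = a then M.Δ (lastState h.1 h.2) a t else 0) *
        pathProbAux σ (h.1, h.2 ++ [(a, t)]) rest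

/-- Probability that the length-`n` prefix of a run from `s` under `σ`
satisfies the predicate `P`. -/
def probEvent [Fintype A] (σ : Strat S A) (s : S) (n : ℕ) (P : List (A × S) → Prop) : NNReal :=
  ∑ f : Fin n → A × S,
    if P (List.ofFn f) then M.pathProbAux σ (s, []) (List.ofFn f) else 0

/-- Number of visits of `T` along a finite path. -/
def visitCount (T : Set S) (s : S) (steps : List (A × S)) : ℕ :=
  (s :: steps.map Prod.snd).countP (fun x => decide (x ∈ T))

/-- `T` is visited infinitely often with probability one under `σ` from `s`. -/
def buchiAS [Fintype A] (σ : Strat S A) (s : S) (T : Set S) : Prop :=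
  ∀ k : ℕ,
    (⨆ n : ℕ, M.probEvent σ s n (fun steps => k ≤ visitCount T s steps)) = 1

/-- Minimal `d ≤ cap` s.t. some strategy is `d`-safe in `s` and visits `T`
infinitely often almost surely. -/
def safeBuchiVec [Fintype A] (T : Set S) (s : S) : ℕ∞ :=
  ⨅ d ∈ {d : ℕ | d ≤ M.cap ∧ ∃ σ : Strat S A, M.SafeStrat σ d s ∧ M.buchiAS σ s T}, (d : ℕ∞)

/-- Iterated memory update of a memory structure. -/
def updStar {Mem : Type} (upd : Mem → S → A → S → Mem) : Mem → S → List (A × S) → Mem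
  | m, _, [] => m
  | m, s, (a, t) :: rest => updStar upd (upd m s a t) t rest

/-- Finite-memory strategies: encodable by a finite memory structure. -/
def FinMemStrategy (σ : Strat S A) : Prop :=
  ∃ (Mem : Type) (_ : Finite Mem) (init : S → Mem) (upd : Mem → S → A → S → Mem)
    (nxt : Mem → S → A),
    ∀ h : S × List (A × S), σ h = nxt (updStar upd (init h.1) h.1 h.2) (lastState h.1 h.2)

/-- The joint run `α ⊙ ρ`. -/
def jointRun (s : S) (steps : List (A × S)) (ρ : ℕ → S × A) : ℕ → S × A :=
  fun i => if h : i < steps.length then (stateAt s steps i, (steps.get ⟨i, h⟩).1)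
           else ρ (i - steps.length)

end CMDP

/-!
Take a strategy `σ` that is `d`-safe in `s` for `d = Safe_M(s)`, and let `a = σ (s, [])`. The
energy level after the first step is some `l` with `C(s,a) + l` equal to `cap` if `s ∈ R` and
to `d` otherwise. From each successor `t`, the strategy that plays `σ` on histories prefixed by
`(s, a, t)` is `l`-safe, so `Safe_M(t) ≤ l`, and `a` is a safe action.
-/

namespace CMDP

variable {S A : Type}

def consRun (p : S × A) (ρ : ℕ → S × A) : ℕ → S × A
  | 0 => p
  | i + 1 => ρ i

theorem prefixSteps_consRun (p : S × A) (ρ : ℕ → S × A) (i : ℕ) :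
    prefixSteps (consRun p ρ) (i + 1) = (p.2, runState ρ 0) :: prefixSteps ρ i := by
  simp [prefixSteps, List.range_succ_eq_map, consRun, runState]

theorem prefixSteps_succ (ρ : ℕ → S × A) (i : ℕ) :
    prefixSteps ρ (i + 1) = prefixSteps ρ i ++ [((ρ i).2, (ρ (i + 1)).1)] := by
  simp [prefixSteps, List.range_succ]

theorem lastState_append_singleton (s : S) (L : List (A × S)) (a : A) (t : S) :
    lastState s (L ++ [(a, t)]) = t := by
  induction L generalizing s with
  | nil => rfl
  | cons p L ih => exact ih p.2

def residualStrat (σ : Strat S A) (s : S) (a : A) : Strat S A :=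
  fun h => σ (s, (a, h.1) :: h.2)

variable [Fintype S] (M : CMDP S A)

theorem succ_nonempty (s : S) (a : A) : (M.Succ s a).Nonempty := by
  obtain ⟨t, -, ht⟩ := Finset.exists_ne_zero_of_sum_ne_zero (s := Finset.univ) (f := M.Δ s a)
    (by rw [M.Δ_sum]; exact one_ne_zero)
  exact ⟨t, pos_iff_ne_zero.2 ht⟩

def canonicalHist (σ : Strat S A) (u : S) : ℕ → List (A × S)
  | 0 => []
  | n + 1 =>
      let h := canonicalHist σ u n
      h ++ [(σ (u, h), (M.succ_nonempty (lastState u h) (σ (u, h))).some)]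

def canonicalRun (σ : Strat S A) (u : S) (n : ℕ) : S × A :=
  (lastState u (M.canonicalHist σ u n), σ (u, M.canonicalHist σ u n))

theorem prefixSteps_canonicalRun (σ : Strat S A) (u : S) (n : ℕ) :
    prefixSteps (M.canonicalRun σ u) n = M.canonicalHist σ u n := by
  induction n with
  | zero => rfl
  | succ n ih =>
    rw [prefixSteps_succ, ih]
    simp only [canonicalHist, canonicalRun, lastState_append_singleton]

theorem compatFrom_canonicalRun (σ : Strat S A) (u : S) :
    M.CompatFrom σ u (M.canonicalRun σ u) := by
  refine ⟨⟨fun i => ?_, fun i => ?_⟩, rfl⟩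
  · simp only [canonicalRun, canonicalHist, lastState_append_singleton]
    exact Set.Nonempty.some_mem _
  · rw [prefixSteps_canonicalRun]
    rfl

variable {M}

theorem CompatFrom.cons {σ : Strat S A} {s t : S} {ρ : ℕ → S × A}
    (hρ : M.CompatFrom (residualStrat σ s (σ (s, []))) t ρ) (ht : t ∈ M.Succ s (σ (s, []))) :
    M.CompatFrom σ s (consRun (s, σ (s, [])) ρ) := by
  obtain ⟨⟨hrun, hact⟩, rfl⟩ := hρ
  refine ⟨⟨fun i => ?_, fun i => ?_⟩, rfl⟩
  · cases i with
    | zero => exact ht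
    | succ i => exact hrun i
  · cases i with
    | zero => rfl
    | succ i =>
      rw [prefixSteps_consRun]
      exact hact i

theorem C_add_of_levelStep_eq_some {s : S} {a : A} {d l : ℕ} (h : M.levelStep s a d = some l) :
    M.C s a + l = if s ∈ M.R then M.cap else d := by
  unfold levelStep at h
  split_ifs at h ⊢ <;> cases h <;> omega

theorem SafeStrat.levelStep_ne_none {σ : Strat S A} {d : ℕ} {s : S} (hσ : M.SafeStrat σ d s) :
    M.levelStep s (σ (s, [])) d ≠ none := by
  obtain ⟨t, ht⟩ := M.succ_nonempty s (σ (s, []))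
  have hρ := M.compatFrom_canonicalRun (residualStrat σ s (σ (s, []))) t
  intro hnone
  apply hσ _ (hρ.cons ht) 1
  rw [prefixSteps_consRun]
  simp only [runState, consRun, energy, energyFrom, hnone]

theorem SafeStrat.residualStrat {σ : Strat S A} {d l : ℕ} {s t : S} (hσ : M.SafeStrat σ d s)
    (hl : M.levelStep s (σ (s, [])) d = some l) (ht : t ∈ M.Succ s (σ (s, []))) :
    M.SafeStrat (residualStrat σ s (σ (s, []))) l t := by
  intro ρ hρ i
  have hsafe := hσ _ (hρ.cons ht) (i + 1)
  rwa [prefixSteps_consRun, show runState (consRun (s, σ (s, [])) ρ) 0 = s from rfl, energy,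
    energyFrom, hl] at hsafe

theorem safeVec_le {σ : Strat S A} {d : ℕ} {s : S} (hd : d ≤ M.cap) (hσ : M.SafeStrat σ d s) :
    M.safeVec s ≤ d :=
  iInf₂_le d ⟨hd, σ, hσ⟩

theorem exists_safeStrat_eq_safeVec {s : S} (h : M.safeVec s < ⊤) :
    ∃ d ≤ M.cap, ∃ σ : Strat S A, M.SafeStrat σ d s ∧ M.safeVec s = d := by
  have hne : ∃ d, d ≤ M.cap ∧ ∃ σ : Strat S A, M.SafeStrat σ d s := by
    by_contra! hnone
    exact h.ne (iInf₂_eq_top.2 fun d ⟨hd, σ, hσ⟩ => absurd hσ (hnone d hd σ))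
  obtain ⟨hdcap, σ, hσ⟩ := Nat.find_spec hne
  exact ⟨Nat.find hne, hdcap, σ, hσ, le_antisymm (safeVec_le hdcap hσ)
    (le_iInf₂ fun e he => Nat.cast_le.2 (Nat.find_min' hne he))⟩

theorem SafeStrat.C_add_iSup_safeVec_le {σ : Strat S A} {d : ℕ} {s : S} (hd : d ≤ M.cap)
    (hσ : M.SafeStrat σ d s) :
    (M.C s (σ (s, [])) : ℕ∞) + ⨆ t ∈ M.Succ s (σ (s, [])), M.safeVec t ≤
      ((if s ∈ M.R then M.cap else d : ℕ) : ℕ∞) := by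
  obtain ⟨l, hl⟩ := Option.ne_none_iff_exists'.mp hσ.levelStep_ne_none
  have hsum := C_add_of_levelStep_eq_some hl
  have hl_cap : l ≤ M.cap := by split_ifs at hsum <;> omega
  calc (M.C s (σ (s, [])) : ℕ∞) + ⨆ t ∈ M.Succ s (σ (s, [])), M.safeVec t
      ≤ M.C s (σ (s, [])) + l :=
        add_le_add_right (iSup₂_le fun t ht => safeVec_le hl_cap (hσ.residualStrat hl ht)) _
    _ = _ := by rw [← hsum, Nat.cast_add]

end CMDP

open CMDP in
theorem exists_safe_action_general {S A : Type} [Fintype S] (M : CMDP S A)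
    (s : S) (h : M.safeVec s < ⊤) :
    ∃ a : A, M.SafeAction s a := by
  obtain ⟨d, hd, σ, hσ, hsafe⟩ := M.exists_safeStrat_eq_safeVec h
  have hbound := hσ.C_add_iSup_safeVec_le hd
  by_cases hs : s ∈ M.R
  · exact ⟨σ (s, []), Or.inr ⟨hs, by simpa [hs] using hbound⟩⟩
  · exact ⟨σ (s, []), Or.inl ⟨hs, by simpa [hs, hsafe] using hbound⟩⟩

open CMDP in
/-- In a decreasing CMDP, every state with finite safe value has a safe action. -/
theorem exists_safe_action {S A : Type} [Fintype S] (M : CMDP S A)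
    (hdec : M.Decreasing) (s : S) (h : M.safeVec s < ⊤) :
    ∃ a : A, M.SafeAction s a :=
  exists_safe_action_general M s h
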